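/- arXiv:1507.07912 — 3 statements merged into one kernel-verified Lean document; each statement's English description precedes it below -/
import Mathlib

section
/- For every real x ≠ 1/2, the point ρ(x) = (x, x/(2x-1), x) is a period-two point of the Fibonacci trace map, i.e., T(T(ρ(x))) = ρ(x). Conversely, any point p = (a,b,c) with T(T(p)) = p satisfies a = c and b(2a - 1) = a. -/
/-- The Fibonacci trace map. -/
def traceMap : ℝ × ℝ × ℝ → ℝ × ℝ × ℝ :=
  fun p => (2 * p.1 * p.2.1 - p.2.2, p.1, p.2.1)

/-- The curve of period-two points. -/
noncomputable def rhoCurve (x : ℝ) : ℝ × ℝ × ℝ := (x, x / (2 * x - 1), x)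

/-- Period-two points of the Fibonacci trace map: ρ(x) has period two for x ≠ 1/2, and
conversely any period-two point (a,b,c) satisfies a = c and b(2a-1) = a. -/
theorem traceMap_period_two :
    (∀ x : ℝ, x ≠ 1 / 2 → traceMap (traceMap (rhoCurve x)) = rhoCurve x) ∧
      ∀ a b c : ℝ, traceMap (traceMap (a, b, c)) = (a, b, c) →
        a = c ∧ b * (2 * a - 1) = a := by
  constructor
  · intro x hx
    have h : (2 * x - 1) ≠ 0 := by
      intro h; apply hx; linarith
    simp only [traceMap, rhoCurve, Prod.mk.injEq]
    refine ⟨?_, ?_, trivial⟩ <;> field_simp <;> ring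
  · intro a b c h
    simp only [traceMap, Prod.mk.injEq] at h
    obtain ⟨h1, h2, h3⟩ := h
    exact ⟨h3, by rw [h3] at h2 ⊢; linarith [h2]⟩
end

section
/- Let J = [a,b] be a compact nondegenerate interval and Δ > 0. Suppose g : J → ℝ is C^2 with |g''| < Δ/2 on J, and u, v : J → ℝ are C^2 with u'' > Δ and v'' > Δ on J. Suppose the graph of u is tangent to the graph of g at α ∈ J (i.e., u(α) = g(α) and u'(α) = g'(α)) and the graph of v is tangent to the graph of g at β ∈ J with α < β. Then there exists t ∈ [α, β] with u(t) = v(t). -/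
/-- A function with positive second derivative, tangent to zero at `c`, is nonneg on `[a,b]`. -/
lemma aux_nonneg (a b c : ℝ) (h h' h'' : ℝ → ℝ)
    (h1 : ∀ t ∈ Set.Icc a b, HasDerivAt h (h' t) t)
    (h2 : ∀ t ∈ Set.Icc a b, HasDerivAt h' (h'' t) t)
    (hpos : ∀ t ∈ Set.Icc a b, 0 < h'' t)
    (hc : c ∈ Set.Icc a b) (hc0 : h c = 0) (hc1 : h' c = 0)
    (x : ℝ) (hx : x ∈ Set.Icc a b) : 0 ≤ h x := by
  have hcont' : ContinuousOn h' (Set.Icc a b) := fun t ht =>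
    ((h2 t ht).continuousAt).continuousWithinAt
  have hcont : ContinuousOn h (Set.Icc a b) := fun t ht =>
    ((h1 t ht).continuousAt).continuousWithinAt
  have hmono' : StrictMonoOn h' (Set.Icc a b) := by
    apply strictMonoOn_of_deriv_pos (convex_Icc a b) hcont'
    intro t ht
    rw [interior_Icc] at ht
    rw [(h2 t (Set.Ioo_subset_Icc_self ht)).deriv]
    exact hpos t (Set.Ioo_subset_Icc_self ht)
  rcases le_or_gt c x with hcx | hxc
  · -- h monotone on [c, b]
    have hmono : MonotoneOn h (Set.Icc c b) := by
      apply monotoneOn_of_deriv_nonneg (convex_Icc c b)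
        (hcont.mono (Set.Icc_subset_Icc hc.1 le_rfl))
      · intro t ht
        rw [interior_Icc] at ht
        have ht' : t ∈ Set.Icc a b := ⟨hc.1.trans ht.1.le, ht.2.le⟩
        exact ((h1 t ht').differentiableAt).differentiableWithinAt
      · intro t ht
        rw [interior_Icc] at ht
        have ht' : t ∈ Set.Icc a b := ⟨hc.1.trans ht.1.le, ht.2.le⟩
        rw [(h1 t ht').deriv]
        have : h' c < h' t := hmono' hc ht' ht.1
        linarith [hc1]
    have := hmono (Set.left_mem_Icc.2 hc.2) ⟨hcx, hx.2⟩ hcx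
    linarith [hc0]
  · -- h antitone on [a, c]
    have hanti : AntitoneOn h (Set.Icc a c) := by
      apply antitoneOn_of_deriv_nonpos (convex_Icc a c)
        (hcont.mono (Set.Icc_subset_Icc le_rfl hc.2))
      · intro t ht
        rw [interior_Icc] at ht
        have ht' : t ∈ Set.Icc a b := ⟨ht.1.le, ht.2.le.trans hc.2⟩
        exact ((h1 t ht').differentiableAt).differentiableWithinAt
      · intro t ht
        rw [interior_Icc] at ht
        have ht' : t ∈ Set.Icc a b := ⟨ht.1.le, ht.2.le.trans hc.2⟩
        rw [(h1 t ht').deriv]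
        have : h' t < h' c := hmono' ht' hc ht.2
        linarith [hc1]
    have := hanti ⟨hx.1, hxc.le⟩ (Set.right_mem_Icc.2 (hx.1.trans hxc.le)) hxc.le
    linarith [hc0]

/-- If two C² functions u, v with second derivative > Δ are each tangent to a C² function g
with |g''| < Δ/2 (u at α, v at β, α < β), then the graphs of u and v intersect over [α, β]. -/
theorem graphs_of_steep_tangent_curves_intersect
    (a b Δ α β : ℝ) (hab : a < b) (hΔ : 0 < Δ)
    (g g' g'' u u' u'' v v' v'' : ℝ → ℝ)
    (hg1 : ∀ t ∈ Set.Icc a b, HasDerivAt g (g' t) t)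
    (hg2 : ∀ t ∈ Set.Icc a b, HasDerivAt g' (g'' t) t)
    (hgc : ContinuousOn g'' (Set.Icc a b))
    (hu1 : ∀ t ∈ Set.Icc a b, HasDerivAt u (u' t) t)
    (hu2 : ∀ t ∈ Set.Icc a b, HasDerivAt u' (u'' t) t)
    (huc : ContinuousOn u'' (Set.Icc a b))
    (hv1 : ∀ t ∈ Set.Icc a b, HasDerivAt v (v' t) t)
    (hv2 : ∀ t ∈ Set.Icc a b, HasDerivAt v' (v'' t) t)
    (hvc : ContinuousOn v'' (Set.Icc a b))
    (hgbound : ∀ t ∈ Set.Icc a b, |g'' t| < Δ / 2)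
    (hubound : ∀ t ∈ Set.Icc a b, Δ < u'' t)
    (hvbound : ∀ t ∈ Set.Icc a b, Δ < v'' t)
    (hα : α ∈ Set.Icc a b) (hβ : β ∈ Set.Icc a b) (hαβ : α < β)
    (htanu : u α = g α ∧ u' α = g' α)
    (htanv : v β = g β ∧ v' β = g' β) :
    ∃ t ∈ Set.Icc α β, u t = v t := by
  -- u - g ≥ 0 on [a,b]
  have hug : ∀ x ∈ Set.Icc a b, 0 ≤ u x - g x := by
    intro x hx
    refine aux_nonneg a b α (fun t => u t - g t) (fun t => u' t - g' t)
      (fun t => u'' t - g'' t)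
      (fun t ht => (hu1 t ht).sub (hg1 t ht))
      (fun t ht => (hu2 t ht).sub (hg2 t ht)) ?_ hα ?_ ?_ x hx
    · intro t ht
      have := (abs_lt.1 (hgbound t ht)).2
      have := hubound t ht
      show 0 < u'' t - g'' t
      linarith
    · simp [htanu.1]
    · simp [htanu.2]
  have hvg : ∀ x ∈ Set.Icc a b, 0 ≤ v x - g x := by
    intro x hx
    refine aux_nonneg a b β (fun t => v t - g t) (fun t => v' t - g' t)
      (fun t => v'' t - g'' t)
      (fun t ht => (hv1 t ht).sub (hg1 t ht))
      (fun t ht => (hv2 t ht).sub (hg2 t ht)) ?_ hβ ?_ ?_ x hx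
    · intro t ht
      have := (abs_lt.1 (hgbound t ht)).2
      have := hvbound t ht
      show 0 < v'' t - g'' t
      linarith
    · simp [htanv.1]
    · simp [htanv.2]
  -- IVT for u - v on [α, β]
  have hsub : Set.Icc α β ⊆ Set.Icc a b := Set.Icc_subset_Icc hα.1 hβ.2
  have hcont : ContinuousOn (fun t => u t - v t) (Set.Icc α β) := fun t ht =>
    (((hu1 t (hsub ht)).sub (hv1 t (hsub ht))).continuousAt).continuousWithinAt
  have h0 : (0 : ℝ) ∈ Set.Icc (u α - v α) (u β - v β) := by
    constructor
    · have := hvg α hα; linarith [htanu.1]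
    · have := hug β hβ; linarith [htanv.1]
  obtain ⟨t, ht, ht0⟩ := intermediate_value_Icc hαβ.le hcont h0
  exact ⟨t, ht, sub_eq_zero.1 ht0⟩
end

section
/- Gap Lemma (Newhouse): if C_1 and C_2 are Cantor sets in ℝ with τ(C_1)·τ(C_2) > 1, C_1 is not contained in a single gap or the unbounded complementary components of C_2, and C_2 is not contained in a single gap or the unbounded complementary components of C_1, then C_1 ∩ C_2 ≠ ∅. -/
/-- A Cantor set: a nonempty compact perfect totally disconnected subset of ℝ. -/
def IsCantorSet (C : Set ℝ) : Prop :=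
  C.Nonempty ∧ IsCompact C ∧ Perfect C ∧ IsTotallyDisconnected C

/-- A gap of a Cantor set `C`: a bounded connected component of the complement of `C`
inside its convex hull, i.e. an open interval with endpoints in `C` and interior
disjoint from `C`. -/
def IsGap (C U : Set ℝ) : Prop :=
  ∃ p q : ℝ, p < q ∧ p ∈ C ∧ q ∈ C ∧ U = Set.Ioo p q ∧ Set.Ioo p q ∩ C = ∅

/-- A presentation of a Cantor set: an injective enumeration of all its gaps. -/
def IsPresentation (C : Set ℝ) (𝒰 : ℕ → Set ℝ) : Prop :=
  Function.Injective 𝒰 ∧ (∀ n, IsGap C (𝒰 n)) ∧ ∀ U, IsGap C U → ∃ n, U = 𝒰 n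

/-- The local thickness τ(C, 𝒰, u) at the boundary point `u` of the gap `𝒰 n`: the ratio
|K|/|𝒰 n| where `K` is the connected component containing `u` of the convex hull of `C`
minus the first `n+1` gaps. -/
noncomputable def localThickness (C : Set ℝ) (𝒰 : ℕ → Set ℝ) (n : ℕ) (u : ℝ) : ℝ :=
  Metric.diam
    (connectedComponentIn
      (Set.Icc (sInf C) (sSup C) \ ⋃ i ∈ Finset.range (n + 1), 𝒰 i) u) /
    Metric.diam (𝒰 n)

/-- The thickness τ(C): the supremum over presentations 𝒰 of the infimum of the local
thicknesses over all gaps and their boundary points. -/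
noncomputable def thickness (C : Set ℝ) : ℝ :=
  sSup {t | ∃ 𝒰 : ℕ → Set ℝ, IsPresentation C 𝒰 ∧
    t = sInf {s | ∃ n : ℕ, ∃ u ∈ frontier (𝒰 n), s = localThickness C 𝒰 n u}}


/-!
Suppose `C₁ ∩ C₂ = ∅`, and call gaps `U = (a, c)` of `C₁` and `V = (b, d)` of `C₂` linked when
`a < b < c < d` (or symmetrically). The position hypotheses provide a linked pair. Given one,
let `K` be the bridge of `U` at `c` and `L` the bridge of `V` at `b`, so `|K| ≥ τ₁|U|` and
`|L| ≥ τ₂|V|` (for thicknesses slightly below `τ(C₁)`, `τ(C₂)`). If `d ∉ K` and `a ∉ L`, then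
`K ⊆ (b, d)` and `L ⊆ (a, c)`, giving `τ₁ τ₂ |U| |V| ≤ |V| |U|`, impossible. Hence, say, `d ∈ K`;
then `d` lies in a gap of `C₁` of later index than `U` which is linked with `V`. So linked pairs
with arbitrarily large index sums exist. But linked gaps are longer than the positive distance
between `C₁` and `C₂`, and only finitely many gaps are that long.
-/

open Set Metric Function

theorem Set.OrdConnected.subset_Ioo {α : Type*} [LinearOrder α] {K : Set α} (hK : K.OrdConnected)
    {x y z : α} (hx : x ∈ K) (hy : y ∉ K) (hz : z ∉ K) (hyx : y < x) (hxz : x < z) :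
    K ⊆ Ioo y z := by
  intro k hk
  by_contra hkyz
  rcases not_and_or.1 hkyz with hky | hkz
  · exact hy (hK.out hk hx ⟨not_lt.1 hky, hyx.le⟩)
  · exact hz (hK.out hx hk ⟨hxz.le, not_lt.1 hkz⟩)

theorem exists_pos_le_dist {s t : Set ℝ} (hs : IsCompact s) (ht : IsClosed t)
    (hst : Disjoint s t) : ∃ δ > 0, ∀ x ∈ s, ∀ y ∈ t, δ ≤ dist x y := by
  obtain ⟨r, hr, h⟩ := Metric.exists_pos_forall_lt_edist hs ht hst
  refine ⟨r, hr, fun x hx y hy => ?_⟩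
  have hlt := h x hx y hy
  rw [edist_dist, ← ENNReal.ofReal_coe_nnreal] at hlt
  exact ((ENNReal.ofReal_lt_ofReal_iff_of_nonneg r.2).1 hlt).le

theorem exists_mem_Ioo_sInf_sSup {C D : Set ℝ} (hC : IsCompact C) (hD : IsCompact D)
    (hDne : D.Nonempty) (hCD : Disjoint C D) (hleft : ¬C ⊆ Iio (sInf D))
    (hright : ¬C ⊆ Ioi (sSup D)) :
    (∃ x ∈ C, x ∈ Ioo (sInf D) (sSup D)) ∨ ∃ y ∈ D, y ∈ Ioo (sInf C) (sSup C) := by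
  obtain ⟨c₁, hc₁, hDc₁⟩ := not_subset.1 hleft
  obtain ⟨c₂, hc₂, hc₂D⟩ := not_subset.1 hright
  have hinf := hD.sInf_mem hDne
  have hsup := hD.sSup_mem hDne
  have hinf_c₁ : sInf D < c₁ := (not_lt.1 hDc₁).lt_of_ne (hCD.ne_of_mem hc₁ hinf).symm
  have hc₂_sup : c₂ < sSup D := (not_lt.1 hc₂D).lt_of_ne (hCD.ne_of_mem hc₂ hsup)
  by_cases hc₁_sup : c₁ < sSup D
  · exact Or.inl ⟨c₁, hc₁, hinf_c₁, hc₁_sup⟩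
  by_cases hinf_c₂ : sInf D < c₂
  · exact Or.inl ⟨c₂, hc₂, hinf_c₂, hc₂_sup⟩
  have hc₂_inf : c₂ < sInf D := (not_lt.1 hinf_c₂).lt_of_ne (hCD.ne_of_mem hc₂ hinf)
  have hsup_c₁ : sSup D < c₁ := (not_lt.1 hc₁_sup).lt_of_ne (hCD.ne_of_mem hc₁ hsup).symm
  refine Or.inr ⟨sInf D, hinf, (csInf_le hC.bddBelow hc₂).trans_lt hc₂_inf, ?_⟩
  exact ((le_csSup hD.bddAbove hinf).trans_lt hsup_c₁).trans_le (le_csSup hC.bddAbove hc₁)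

section Gaps

variable {C : Set ℝ} {p q c y : ℝ}

theorem le_left_of_mem_gap (hgap : Ioo p q ∩ C = ∅) (hc : c ∈ C) (hy : y ∈ Ioo p q)
    (hcy : c < y) : c ≤ p :=
  not_lt.1 fun hpc => (eq_empty_iff_forall_notMem.1 hgap c) ⟨⟨hpc, hcy.trans hy.2⟩, hc⟩

theorem right_le_of_mem_gap (hgap : Ioo p q ∩ C = ∅) (hc : c ∈ C) (hy : y ∈ Ioo p q)
    (hyc : y < c) : q ≤ c :=
  not_lt.1 fun hcq => (eq_empty_iff_forall_notMem.1 hgap c) ⟨⟨hy.1.trans hyc, hcq⟩, hc⟩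

theorem IsGap.disjoint {U V : Set ℝ} (hU : IsGap C U) (hV : IsGap C V) (hUV : U ≠ V) :
    Disjoint U V := by
  obtain ⟨p, q, -, hp, hq, rfl, hpq⟩ := hU
  obtain ⟨p', q', -, hp', hq', rfl, hpq'⟩ := hV
  refine Set.disjoint_left.2 fun x hx hx' => hUV ?_
  rw [le_antisymm (le_left_of_mem_gap hpq' hp hx' hx.1) (le_left_of_mem_gap hpq hp' hx hx'.1),
    le_antisymm (right_le_of_mem_gap hpq hq' hx hx'.2) (right_le_of_mem_gap hpq' hq hx' hx.2)]

theorem IsCompact.exists_isGap_mem (hC : IsCompact C) (hne : C.Nonempty)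
    (hy : y ∈ Icc (sInf C) (sSup C)) (hyC : y ∉ C) : ∃ U, IsGap C U ∧ y ∈ U := by
  have hbelow : (C ∩ Iic y).Nonempty := ⟨sInf C, hC.sInf_mem hne, hy.1⟩
  have habove : (C ∩ Ici y).Nonempty := ⟨sSup C, hC.sSup_mem hne, hy.2⟩
  have hp := (hC.inter_right isClosed_Iic).sSup_mem hbelow
  have hq := (hC.inter_right isClosed_Ici).sInf_mem habove
  have hpy : sSup (C ∩ Iic y) < y := lt_of_le_of_ne hp.2 fun h => hyC (h ▸ hp.1)
  have hyq : y < sInf (C ∩ Ici y) := lt_of_le_of_ne hq.2 fun h => hyC (h ▸ hq.1)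
  refine ⟨_, ⟨_, _, hpy.trans hyq, hp.1, hq.1, rfl, ?_⟩, hpy, hyq⟩
  refine eq_empty_iff_forall_notMem.2 fun x ⟨⟨hpx, hxq⟩, hx⟩ => ?_
  rcases le_or_gt x y with hxy | hxy
  · exact (le_csSup (hC.inter_right isClosed_Iic).bddAbove ⟨hx, hxy⟩).not_gt hpx
  · exact (csInf_le (hC.inter_right isClosed_Ici).bddBelow ⟨hx, hxy.le⟩).not_gt hxq

end Gaps

namespace IsPresentation

variable {C : Set ℝ} {𝒰 : ℕ → Set ℝ}

theorem notMem (hP : IsPresentation C 𝒰) {x : ℝ} (hx : x ∈ C) (i : ℕ) : x ∉ 𝒰 i := by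
  obtain ⟨p, q, -, -, -, hUi, hgap⟩ := hP.2.1 i
  rw [hUi]
  exact fun hxi => (eq_empty_iff_forall_notMem.1 hgap x) ⟨hxi, hx⟩

theorem exists_mem (hP : IsPresentation C 𝒰) (hC : IsCompact C) (hne : C.Nonempty) {y : ℝ}
    (hy : y ∈ Icc (sInf C) (sSup C)) (hyC : y ∉ C) : ∃ m, y ∈ 𝒰 m := by
  obtain ⟨U, hU, hyU⟩ := hC.exists_isGap_mem hne hy hyC
  obtain ⟨m, rfl⟩ := hP.2.2 U hU
  exact ⟨m, hyU⟩

theorem finite_setOf_le_diam (hP : IsPresentation C 𝒰) (hC : IsCompact C) {ε : ℝ}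
    (hε : 0 < ε) : {n | ε ≤ diam (𝒰 n)}.Finite := by
  have hvolume : ∀ n, MeasureTheory.volume (𝒰 n) = ENNReal.ofReal (diam (𝒰 n)) := fun n => by
    obtain ⟨p, q, hpq, -, -, hUn, -⟩ := hP.2.1 n
    rw [hUn, Real.volume_Ioo, Real.diam_Ioo hpq.le]
  have hdisjoint : Pairwise (Disjoint on 𝒰) := fun m n hmn =>
    (hP.2.1 m).disjoint (hP.2.1 n) (hP.1.ne hmn)
  have hmeasurable : ∀ n, MeasurableSet (𝒰 n) := fun n => by
    obtain ⟨p, q, -, -, -, hUn, -⟩ := hP.2.1 n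
    exact hUn ▸ measurableSet_Ioo
  have hsubset : (⋃ n, 𝒰 n) ⊆ Icc (sInf C) (sSup C) := iUnion_subset fun n x hx => by
    obtain ⟨p, q, -, hp, hq, hUn, -⟩ := hP.2.1 n
    rw [hUn] at hx
    exact ⟨(csInf_le hC.bddBelow hp).trans hx.1.le, hx.2.le.trans (le_csSup hC.bddAbove hq)⟩
  have hsum : ∑' n, MeasureTheory.volume (𝒰 n) ≠ ⊤ := by
    rw [← MeasureTheory.measure_iUnion hdisjoint hmeasurable]
    exact ((MeasureTheory.measure_mono hsubset).trans_lt measure_Icc_lt_top).ne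
  refine (ENNReal.finite_const_le_of_tsum_ne_top hsum (ENNReal.ofReal_pos.2 hε).ne').subset ?_
  intro n hn
  rw [mem_ofPred_eq, hvolume]
  exact ENNReal.ofReal_le_ofReal hn

theorem exists_gap_right (hP : IsPresentation C 𝒰) (hC : IsCompact C) {x y : ℝ} (hx : x ∈ C)
    (hxy : x < y) (hy : y ≤ sSup C) (hyC : y ∉ C) :
    ∃ m p q, 𝒰 m = Ioo p q ∧ p ∈ C ∧ q ∈ C ∧ x ≤ p ∧ p < y ∧ y < q := by
  obtain ⟨m, hym⟩ := hP.exists_mem hC ⟨x, hx⟩ ⟨(csInf_le hC.bddBelow hx).trans hxy.le, hy⟩ hyC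
  obtain ⟨p, q, -, hp, hq, hUm, hgap⟩ := hP.2.1 m
  rw [hUm] at hym
  exact ⟨m, p, q, hUm, hp, hq, le_left_of_mem_gap hgap hx hym hxy, hym.1, hym.2⟩

theorem exists_gap_left (hP : IsPresentation C 𝒰) (hC : IsCompact C) {x y : ℝ} (hx : x ∈ C)
    (hyx : y < x) (hy : sInf C ≤ y) (hyC : y ∉ C) :
    ∃ m p q, 𝒰 m = Ioo p q ∧ p ∈ C ∧ q ∈ C ∧ p < y ∧ y < q ∧ q ≤ x := by
  obtain ⟨m, hym⟩ := hP.exists_mem hC ⟨x, hx⟩ ⟨hy, hyx.le.trans (le_csSup hC.bddAbove hx)⟩ hyC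
  obtain ⟨p, q, -, hp, hq, hUm, hgap⟩ := hP.2.1 m
  rw [hUm] at hym
  exact ⟨m, p, q, hUm, hp, hq, hym.1, hym.2, right_le_of_mem_gap hgap hx hym hyx⟩

end IsPresentation

theorem thickness_nonneg (C : Set ℝ) : 0 ≤ thickness C :=
  Real.sSup_nonneg fun _ ⟨_, _, ht⟩ => ht ▸ Real.sInf_nonneg fun _ ⟨_, _, _, hs⟩ =>
    hs ▸ div_nonneg diam_nonneg diam_nonneg

theorem exists_presentation_le_localThickness {C : Set ℝ} {s : ℝ} (hs : 0 ≤ s)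
    (hsC : s < thickness C) :
    ∃ 𝒰, IsPresentation C 𝒰 ∧ ∀ n, ∀ u ∈ frontier (𝒰 n), s ≤ localThickness C 𝒰 n u := by
  have hne : {t | ∃ 𝒰 : ℕ → Set ℝ, IsPresentation C 𝒰 ∧
      t = sInf {s | ∃ n : ℕ, ∃ u ∈ frontier (𝒰 n), s = localThickness C 𝒰 n u}}.Nonempty := by
    by_contra hempty
    rw [not_nonempty_iff_eq_empty] at hempty
    rw [thickness, hempty, Real.sSup_empty] at hsC
    exact hsC.not_ge hs
  obtain ⟨_, ⟨𝒰, hP, rfl⟩, hlt⟩ := exists_lt_of_lt_csSup hne hsC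
  refine ⟨𝒰, hP, fun n u hu => hlt.le.trans (csInf_le ⟨0, ?_⟩ ⟨n, u, hu, rfl⟩)⟩
  rintro _ ⟨m, v, -, rfl⟩
  exact div_nonneg diam_nonneg diam_nonneg

theorem exists_pos_lt_pos_lt_one_lt_mul {a b : ℝ} (ha : 0 ≤ a) (hab : 1 < a * b) :
    ∃ s t, 0 < s ∧ s < a ∧ 0 < t ∧ t < b ∧ 1 < s * t := by
  have hb : 0 < b := pos_of_mul_pos_right (one_pos.trans hab) ha
  obtain ⟨s, hbs, hsa⟩ := exists_between ((inv_lt_iff_one_lt_mul₀' hb).2 (mul_comm a b ▸ hab))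
  have hs : 0 < s := (inv_pos.2 hb).trans hbs
  have hsb : 1 < s * b := mul_comm b s ▸ (inv_lt_iff_one_lt_mul₀' hb).1 hbs
  obtain ⟨t, hst, htb⟩ := exists_between ((inv_lt_iff_one_lt_mul₀' hs).2 hsb)
  exact ⟨s, t, hs, hsa, (inv_pos.2 hs).trans hst, htb, (inv_lt_iff_one_lt_mul₀' hs).1 hst⟩

/-- The bridge `K` in the definition of `localThickness`. -/
def bridge (C : Set ℝ) (𝒰 : ℕ → Set ℝ) (n : ℕ) (u : ℝ) : Set ℝ :=
  connectedComponentIn (Icc (sInf C) (sSup C) \ ⋃ i ∈ Finset.range (n + 1), 𝒰 i) u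

section Bridge

variable {C : Set ℝ} {𝒰 : ℕ → Set ℝ} {n : ℕ} {u : ℝ}

theorem bridge_subset : bridge C 𝒰 n u ⊆ Icc (sInf C) (sSup C) \ ⋃ i ∈ Finset.range (n + 1), 𝒰 i :=
  connectedComponentIn_subset _ _

theorem mem_bridge_self (hP : IsPresentation C 𝒰) (hC : IsCompact C) (hu : u ∈ C) :
    u ∈ bridge C 𝒰 n u := by
  refine mem_connectedComponentIn ⟨⟨csInf_le hC.bddBelow hu, le_csSup hC.bddAbove hu⟩, ?_⟩
  simp only [mem_iUnion, not_exists]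
  exact fun i _ => hP.notMem hu i

theorem lt_of_mem_bridge_of_mem {y : ℝ} (hy : y ∈ bridge C 𝒰 n u) {m : ℕ} (hym : y ∈ 𝒰 m) :
    n < m := by
  by_contra! hmn
  exact (bridge_subset hy).2 (mem_biUnion (Finset.mem_range.2 (Nat.lt_succ_of_le hmn)) hym)

theorem diam_bridge_le {y z : ℝ} (hu : u ∈ bridge C 𝒰 n u) (hy : y ∉ bridge C 𝒰 n u)
    (hz : z ∉ bridge C 𝒰 n u) (hyu : y < u) (huz : u < z) : diam (bridge C 𝒰 n u) ≤ z - y := by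
  have hK := (isPreconnected_connectedComponentIn.ordConnected).subset_Ioo hu hy hz hyu huz
  exact (diam_mono hK (isBounded_Ioo y z)).trans (Real.diam_Ioo (hyu.trans huz).le).le

theorem mul_le_diam_bridge {s a b : ℝ} (hs : s ≤ localThickness C 𝒰 n u)
    (hU : 𝒰 n = Ioo a b) (hab : a < b) : s * (b - a) ≤ diam (bridge C 𝒰 n u) := by
  rwa [localThickness, hU, Real.diam_Ioo hab.le, le_div_iff₀ (sub_pos.2 hab)] at hs

end Bridge

def IsLinked (C D U V : Set ℝ) : Prop :=
  ∃ a b c d, U = Ioo a c ∧ V = Ioo b d ∧ a < b ∧ b < c ∧ c < d ∧ a ∈ C ∧ c ∈ C ∧ b ∈ D ∧ d ∈ D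

section Linked

variable {C D : Set ℝ} {𝒰 𝒱 : ℕ → Set ℝ}

theorem IsLinked.le_diam {U V : Set ℝ} {δ : ℝ} (hL : IsLinked C D U V)
    (hδ : ∀ x ∈ C, ∀ y ∈ D, δ ≤ dist x y) : δ ≤ diam U ∧ δ ≤ diam V := by
  obtain ⟨a, b, c, d, rfl, rfl, hab, hbc, hcd, -, hc, hb, -⟩ := hL
  have hcb := hδ c hc b hb
  rw [Real.dist_eq, abs_of_pos (sub_pos.2 hbc)] at hcb
  rw [Real.diam_Ioo (hab.trans hbc).le, Real.diam_Ioo (hbc.trans hcd).le]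
  constructor <;> linarith

theorem IsLinked.exists_next (hC : IsCompact C) (hD : IsCompact D) (hCD : Disjoint C D)
    (hP : IsPresentation C 𝒰) (hQ : IsPresentation D 𝒱) {s t : ℝ} (ht : 0 ≤ t)
    (hst : 1 < s * t) (h𝒰 : ∀ n, ∀ u ∈ frontier (𝒰 n), s ≤ localThickness C 𝒰 n u)
    (h𝒱 : ∀ j, ∀ v ∈ frontier (𝒱 j), t ≤ localThickness D 𝒱 j v) {n j : ℕ}
    (hL : IsLinked C D (𝒰 n) (𝒱 j)) :
    ∃ n' j', n + j < n' + j' ∧ IsLinked D C (𝒱 j') (𝒰 n') := by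
  obtain ⟨a, b, c, d, hU, hV, hab, hbc, hcd, ha, hc, hb, hd⟩ := hL
  have hcK : c ∈ bridge C 𝒰 n c := mem_bridge_self hP hC hc
  have hbK : b ∈ bridge D 𝒱 j b := mem_bridge_self hQ hD hb
  by_cases hdK : d ∈ bridge C 𝒰 n c
  · obtain ⟨m, p, q, hUm, hp, hq, hcp, hpd, hdq⟩ := hP.exists_gap_right hC hc hcd
      (bridge_subset hdK).1.2 (hCD.notMem_of_mem_right hd)
    have hnm : n < m := lt_of_mem_bridge_of_mem hdK (hUm ▸ ⟨hpd, hdq⟩)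
    exact ⟨m, j, by omega, b, p, d, q, hV, hUm, hbc.trans_le hcp, hpd, hdq, hb, hd, hp, hq⟩
  by_cases haK : a ∈ bridge D 𝒱 j b
  · obtain ⟨i, p, q, hVi, hp, hq, hpa, haq, hqb⟩ := hQ.exists_gap_left hD hb hab
      (bridge_subset haK).1.1 (hCD.notMem_of_mem_left ha)
    have hji : j < i := lt_of_mem_bridge_of_mem haK (hVi ▸ ⟨hpa, haq⟩)
    exact ⟨n, i, by omega, p, a, q, c, hVi, hU, hpa, haq, hqb.trans_lt hbc, hp, hq, ha, hc⟩
  have hbU : b ∉ bridge C 𝒰 n c := fun hbK' =>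
    lt_irrefl n (lt_of_mem_bridge_of_mem hbK' (hU ▸ ⟨hab, hbc⟩))
  have hcV : c ∉ bridge D 𝒱 j b := fun hcK' =>
    lt_irrefl j (lt_of_mem_bridge_of_mem hcK' (hV ▸ ⟨hbc, hcd⟩))
  have h𝒰c : s * (c - a) ≤ d - b :=
    (mul_le_diam_bridge (h𝒰 n c (by simp [hU, frontier_Ioo (hab.trans hbc)])) hU
      (hab.trans hbc)).trans (diam_bridge_le hcK hbU hdK hbc hcd)
  have h𝒱b : t * (d - b) ≤ c - a :=
    (mul_le_diam_bridge (h𝒱 j b (by simp [hV, frontier_Ioo (hbc.trans hcd)])) hV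
      (hbc.trans hcd)).trans (diam_bridge_le hbK haK hcV hab hbc)
  -- Otherwise the bridge at `c` lies in `(b, d)` and the bridge at `b` in `(a, c)`.
  have hca : 0 < c - a := by linarith
  have hdb : 0 < d - b := by linarith
  nlinarith [mul_le_mul h𝒰c h𝒱b (by positivity) hdb.le, mul_pos hca hdb]

def IsLinkedPair (C D : Set ℝ) (𝒰 𝒱 : ℕ → Set ℝ) (n j : ℕ) : Prop :=
  IsLinked C D (𝒰 n) (𝒱 j) ∨ IsLinked D C (𝒱 j) (𝒰 n)

theorem IsLinkedPair.symm {n j : ℕ} (hL : IsLinkedPair C D 𝒰 𝒱 n j) :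
    IsLinkedPair D C 𝒱 𝒰 j n :=
  Or.symm hL

theorem IsLinkedPair.le_diam {n j : ℕ} {δ : ℝ} (hL : IsLinkedPair C D 𝒰 𝒱 n j)
    (hδ : ∀ x ∈ C, ∀ y ∈ D, δ ≤ dist x y) : δ ≤ diam (𝒰 n) ∧ δ ≤ diam (𝒱 j) := by
  rcases hL with hL | hL
  · exact hL.le_diam hδ
  · exact (hL.le_diam fun y hy x hx => dist_comm x y ▸ hδ x hx y hy).symm

theorem IsLinkedPair.exists_next (hC : IsCompact C) (hD : IsCompact D) (hCD : Disjoint C D)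
    (hP : IsPresentation C 𝒰) (hQ : IsPresentation D 𝒱) {s t : ℝ} (hs : 0 ≤ s) (ht : 0 ≤ t)
    (hst : 1 < s * t) (h𝒰 : ∀ n, ∀ u ∈ frontier (𝒰 n), s ≤ localThickness C 𝒰 n u)
    (h𝒱 : ∀ j, ∀ v ∈ frontier (𝒱 j), t ≤ localThickness D 𝒱 j v) {n j : ℕ}
    (hL : IsLinkedPair C D 𝒰 𝒱 n j) :
    ∃ n' j', n + j < n' + j' ∧ IsLinkedPair C D 𝒰 𝒱 n' j' := by
  rcases hL with hL | hL
  · obtain ⟨n', j', hlt, hL'⟩ := hL.exists_next hC hD hCD hP hQ ht hst h𝒰 h𝒱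
    exact ⟨n', j', hlt, Or.inr hL'⟩
  · obtain ⟨j', n', hlt, hL'⟩ := hL.exists_next hD hC hCD.symm hQ hP hs (by linarith) h𝒱 h𝒰
    exact ⟨n', j', by omega, Or.inl hL'⟩

theorem not_isLinkedPair (hC : IsCompact C) (hD : IsCompact D) (hCD : Disjoint C D)
    (hP : IsPresentation C 𝒰) (hQ : IsPresentation D 𝒱) {s t : ℝ} (hs : 0 ≤ s) (ht : 0 ≤ t)
    (hst : 1 < s * t) (h𝒰 : ∀ n, ∀ u ∈ frontier (𝒰 n), s ≤ localThickness C 𝒰 n u)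
    (h𝒱 : ∀ j, ∀ v ∈ frontier (𝒱 j), t ≤ localThickness D 𝒱 j v) (n j : ℕ) :
    ¬IsLinkedPair C D 𝒰 𝒱 n j := by
  intro hL
  have hunbounded : ∀ k, ∃ n j, k ≤ n + j ∧ IsLinkedPair C D 𝒰 𝒱 n j := by
    intro k
    induction k with
    | zero => exact ⟨n, j, Nat.zero_le _, hL⟩
    | succ k ih =>
      obtain ⟨n, j, hk, hL⟩ := ih
      obtain ⟨n', j', hlt, hL'⟩ := hL.exists_next hC hD hCD hP hQ hs ht hst h𝒰 h𝒱
      exact ⟨n', j', by omega, hL'⟩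
  obtain ⟨δ, hδ, hCDδ⟩ := exists_pos_le_dist hC hD.isClosed hCD
  obtain ⟨N, hN⟩ := (hP.finite_setOf_le_diam hC hδ).bddAbove
  obtain ⟨M, hM⟩ := (hQ.finite_setOf_le_diam hD hδ).bddAbove
  obtain ⟨n, j, hk, hL⟩ := hunbounded (N + M + 1)
  have hnj := add_le_add (hN (hL.le_diam hCDδ).1) (hM (hL.le_diam hCDδ).2)
  omega

theorem exists_isLinkedPair (hC : IsCompact C) (hD : IsCompact D) (hDne : D.Nonempty)
    (hCD : Disjoint C D) (hP : IsPresentation C 𝒰) (hQ : IsPresentation D 𝒱) {x : ℝ}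
    (hx : x ∈ C) (hxD : x ∈ Ioo (sInf D) (sSup D)) (hgap : ¬∃ U, IsGap D U ∧ C ⊆ U) :
    ∃ n j, IsLinkedPair C D 𝒰 𝒱 n j := by
  obtain ⟨j, hxj⟩ := hQ.exists_mem hD hDne (Ioo_subset_Icc_self hxD) (hCD.notMem_of_mem_left hx)
  obtain ⟨b, d, -, hb, hd, hVj, -⟩ := hQ.2.1 j
  rw [hVj] at hxj
  by_cases hbC : sInf C ≤ b
  · obtain ⟨n, a, c, hUn, ha, hc, hab, hbc, hcx⟩ :=
      hP.exists_gap_left hC hx hxj.1 hbC (hCD.notMem_of_mem_right hb)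
    exact ⟨n, j, Or.inl ⟨a, b, c, d, hUn, hVj, hab, hbc, hcx.trans_lt hxj.2, ha, hc, hb, hd⟩⟩
  by_cases hdC : d ≤ sSup C
  · obtain ⟨n, a, c, hUn, ha, hc, hxa, had, hdc⟩ :=
      hP.exists_gap_right hC hx hxj.2 hdC (hCD.notMem_of_mem_right hd)
    exact ⟨n, j, Or.inr ⟨b, a, d, c, hVj, hUn, hxj.1.trans_le hxa, had, hdc, hb, hd, ha, hc⟩⟩
  refine absurd ⟨_, hQ.2.1 j, fun y hy => hVj ▸ ⟨?_, ?_⟩⟩ hgap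
  · exact (not_le.1 hbC).trans_le (csInf_le hC.bddBelow hy)
  · exact (le_csSup hC.bddAbove hy).trans_lt (not_le.1 hdC)

end Linked

theorem gap_lemma_general (C₁ C₂ : Set ℝ)
    (h₁ : IsCantorSet C₁) (h₂ : IsCantorSet C₂)
    (hτ : 1 < thickness C₁ * thickness C₂)
    (h₁gap : ¬∃ U, IsGap C₂ U ∧ C₁ ⊆ U)
    (h₁left : ¬C₁ ⊆ Set.Iio (sInf C₂)) (h₁right : ¬C₁ ⊆ Set.Ioi (sSup C₂))
    (h₂gap : ¬∃ U, IsGap C₁ U ∧ C₂ ⊆ U) :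
    (C₁ ∩ C₂).Nonempty := by
  obtain ⟨hne₁, hC₁, -, -⟩ := h₁
  obtain ⟨hne₂, hC₂, -, -⟩ := h₂
  by_contra hempty
  have hdisj : Disjoint C₁ C₂ := disjoint_iff_inter_eq_empty.2 (not_nonempty_iff_eq_empty.1 hempty)
  obtain ⟨s, t, hs, hsτ, ht, htτ, hst⟩ :=
    exists_pos_lt_pos_lt_one_lt_mul (thickness_nonneg C₁) hτ
  obtain ⟨𝒰, hP, h𝒰⟩ := exists_presentation_le_localThickness hs.le hsτ
  obtain ⟨𝒱, hQ, h𝒱⟩ := exists_presentation_le_localThickness ht.le htτ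
  obtain ⟨n, j, hL⟩ : ∃ n j, IsLinkedPair C₁ C₂ 𝒰 𝒱 n j := by
    rcases exists_mem_Ioo_sInf_sSup hC₁ hC₂ hne₂ hdisj h₁left h₁right with
      ⟨x, hx, hxI⟩ | ⟨y, hy, hyI⟩
    · exact exists_isLinkedPair hC₁ hC₂ hne₂ hdisj hP hQ hx hxI h₁gap
    · obtain ⟨j, n, hL⟩ := exists_isLinkedPair hC₂ hC₁ hne₁ hdisj.symm hQ hP hy hyI h₂gap
      exact ⟨n, j, hL.symm⟩
  exact not_isLinkedPair hC₁ hC₂ hdisj hP hQ hs.le ht.le hst h𝒰 h𝒱 n j hL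

/-- Newhouse's Gap Lemma: if the thicknesses of two Cantor sets satisfy τ(C₁)·τ(C₂) > 1,
and neither Cantor set is contained in a single gap of the other nor in one of the
unbounded complementary components (the rays beyond the other's convex hull), then the
two Cantor sets intersect. -/
theorem gap_lemma (C₁ C₂ : Set ℝ)
    (h₁ : IsCantorSet C₁) (h₂ : IsCantorSet C₂)
    (hτ : 1 < thickness C₁ * thickness C₂)
    (h₁gap : ¬∃ U, IsGap C₂ U ∧ C₁ ⊆ U)
    (h₁left : ¬C₁ ⊆ Set.Iio (sInf C₂)) (h₁right : ¬C₁ ⊆ Set.Ioi (sSup C₂))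
    (h₂gap : ¬∃ U, IsGap C₁ U ∧ C₂ ⊆ U)
    (h₂left : ¬C₂ ⊆ Set.Iio (sInf C₁)) (h₂right : ¬C₂ ⊆ Set.Ioi (sSup C₁)) :
    (C₁ ∩ C₂).Nonempty :=
  gap_lemma_general C₁ C₂ h₁ h₂ hτ h₁gap h₁left h₁right h₂gap
end
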